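/- For all periodic grid functions e^{k−1}, e^k, e^{k+1}, setting e^{j+1/2} = (1/2)(e^j + e^{j+1}) for j = k−1, k and ê^{k+1/2} = (3/2)e^k − (1/2)e^{k−1}, the following inequality holds: −2h²⟨ê^{k+1/2}, Δ_h e^{k+1/2}⟩ ≤ −(‖∇_h e^{k+1}‖₂² − ‖∇_h e^k‖₂²) + 5‖∇_h e^{k+1/2}‖₂² + ‖∇_h e^{k−1/2}‖₂². -/
import Mathlib


open scoped BigOperators
open MeasureTheory

/-! Discrete setting: periodic grid functions on an `m × n` periodic grid are maps
`ZMod m × ZMod n → ℝ`. -/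

/-- Discrete inner product `⟨φ,ψ⟩ = Σ_{i,j} φ_{i,j} ψ_{i,j}`. -/
noncomputable def gip {m n : ℕ} [NeZero m] [NeZero n] (φ ψ : ZMod m × ZMod n → ℝ) : ℝ :=
  ∑ p : ZMod m × ZMod n, φ p * ψ p

/-- Discrete periodic convolution `[f⋆φ]_{i,j} = h² Σ_{k,l} f_{k,l} φ_{i−k,j−l}`. -/
noncomputable def gconv {m n : ℕ} [NeZero m] [NeZero n] (h : ℝ) (f φ : ZMod m × ZMod n → ℝ) :
    ZMod m × ZMod n → ℝ :=
  fun p => h ^ 2 * ∑ q : ZMod m × ZMod n, f q * φ (p.1 - q.1, p.2 - q.2)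

/-- `[f⋆1] = h² Σ_{k,l} f_{k,l}`. -/
noncomputable def gconvOne {m n : ℕ} [NeZero m] [NeZero n] (h : ℝ) (f : ZMod m × ZMod n → ℝ) : ℝ :=
  h ^ 2 * ∑ q : ZMod m × ZMod n, f q

/-- A kernel is even when `f_{k,l} = f_{−k,−l}`. -/
def EvenKer {m n : ℕ} (f : ZMod m × ZMod n → ℝ) : Prop :=
  ∀ p : ZMod m × ZMod n, f (-p.1, -p.2) = f p

/-- `‖φ‖₂² = h² Σ_{i,j} φ_{i,j}²`. -/
noncomputable def norm2sq {m n : ℕ} [NeZero m] [NeZero n] (h : ℝ) (φ : ZMod m × ZMod n → ℝ) : ℝ :=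
  h ^ 2 * ∑ p : ZMod m × ZMod n, (φ p) ^ 2

/-- `‖φ‖₂ = (h² Σ_{i,j} φ_{i,j}²)^{1/2}`. -/
noncomputable def norm2 {m n : ℕ} [NeZero m] [NeZero n] (h : ℝ) (φ : ZMod m × ZMod n → ℝ) : ℝ :=
  Real.sqrt (norm2sq h φ)

/-- `‖φ‖₄⁴ = h² Σ_{i,j} φ_{i,j}⁴`. -/
noncomputable def norm4p4 {m n : ℕ} [NeZero m] [NeZero n] (h : ℝ) (φ : ZMod m × ZMod n → ℝ) : ℝ :=
  h ^ 2 * ∑ p : ZMod m × ZMod n, (φ p) ^ 4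

/-- `‖φ‖₄ = (h² Σ_{i,j} |φ_{i,j}|⁴)^{1/4}`. -/
noncomputable def norm4 {m n : ℕ} [NeZero m] [NeZero n] (h : ℝ) (φ : ZMod m × ZMod n → ℝ) : ℝ :=
  (norm4p4 h φ) ^ ((1 : ℝ) / 4)

/-- `‖φ‖_∞ = max_{i,j} |φ_{i,j}|`. -/
noncomputable def normInf {m n : ℕ} [NeZero m] [NeZero n] (φ : ZMod m × ZMod n → ℝ) : ℝ :=
  ⨆ p : ZMod m × ZMod n, |φ p|

/-- Five-point discrete Laplacian. -/
noncomputable def glap {m n : ℕ} (h : ℝ) (φ : ZMod m × ZMod n → ℝ) : ZMod m × ZMod n → ℝ :=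
  fun p => (φ (p.1 + 1, p.2) + φ (p.1 - 1, p.2) + φ (p.1, p.2 + 1) + φ (p.1, p.2 - 1) - 4 * φ p) / h ^ 2

/-- `‖∇_h φ‖₂² = Σ_{i,j} [(φ_{i+1,j}−φ_{i,j})² + (φ_{i,j+1}−φ_{i,j})²]`. -/
noncomputable def gradNormSq {m n : ℕ} [NeZero m] [NeZero n] (φ : ZMod m × ZMod n → ℝ) : ℝ :=
  ∑ p : ZMod m × ZMod n, ((φ (p.1 + 1, p.2) - φ p) ^ 2 + (φ (p.1, p.2 + 1) - φ p) ^ 2)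

/-- `‖∇_h φ‖_∞`. -/
noncomputable def gradNormInf {m n : ℕ} [NeZero m] [NeZero n] (h : ℝ) (φ : ZMod m × ZMod n → ℝ) : ℝ :=
  ⨆ p : ZMod m × ZMod n, max (|φ (p.1 + 1, p.2) - φ p| / h) (|φ (p.1, p.2 + 1) - φ p| / h)

/-- Pointwise nonlinear term `η(a,b) = (1/4)(a²+b²)(a+b)`. -/
noncomputable def etaNL {m n : ℕ} (a b : ZMod m × ZMod n → ℝ) : ZMod m × ZMod n → ℝ :=
  fun p => (1 / 4) * ((a p) ^ 2 + (b p) ^ 2) * (a p + b p)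

/-- The chemical potential
`w^{k+1/2} = η(φᵏ,φ^{k+1}) + B_c φ^{k+1/2} − B_e φ̂^{k+1/2} − [J⋆φ̂^{k+1/2}]`,
where `φ^{k+1/2} = (φᵏ+φ^{k+1})/2` and `φ̂^{k+1/2} = (3/2)φᵏ − (1/2)φ^{k−1}`. -/
noncomputable def chemPot {m n : ℕ} [NeZero m] [NeZero n] (h Bc Be : ℝ)
    (J φold φ φnew : ZMod m × ZMod n → ℝ) : ZMod m × ZMod n → ℝ :=
  fun p => etaNL φ φnew p + Bc * ((1 / 2) * (φ p + φnew p))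
    - Be * ((3 / 2) * φ p - (1 / 2) * φold p)
    - gconv h J (fun q => (3 / 2) * φ q - (1 / 2) * φold q) p

/-- Discrete energy
`F(φ) = (1/4)‖φ‖₄⁴ + ((γ_c−γ_e)/2)‖φ‖₂² + ([J⋆1]/2)‖φ‖₂² − (h²/2)⟨φ,[J⋆φ]⟩`. -/
noncomputable def Fdisc {m n : ℕ} [NeZero m] [NeZero n] (h γc γe : ℝ)
    (J φ : ZMod m × ZMod n → ℝ) : ℝ :=
  (1 / 4) * norm4p4 h φ + ((γc - γe) / 2) * norm2sq h φ + (gconvOne h J / 2) * norm2sq h φ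
    - (h ^ 2 / 2) * gip φ (gconv h J φ)

/-- Discrete pseudo energy
`ℰ(φ,ψ) = F(ψ) + ((B_c+B_e)/4)‖ψ−φ‖₂² + (h²/4)⟨[J⋆(ψ−φ)], ψ−φ⟩`. -/
noncomputable def pseudoE {m n : ℕ} [NeZero m] [NeZero n] (h γc γe Bc Be : ℝ)
    (J φ ψ : ZMod m × ZMod n → ℝ) : ℝ :=
  Fdisc h γc γe J ψ + ((Bc + Be) / 4) * norm2sq h (ψ - φ)
    + (h ^ 2 / 4) * gip (gconv h J (ψ - φ)) (ψ - φ)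

/-! Continuous setting: `Ω = (0,L₁) × (0,L₂)` with periodic boundary conditions. -/

/-- The domain `Ω = (0,L₁) × (0,L₂)`. -/
noncomputable def box (L₁ L₂ : ℝ) : Set (ℝ × ℝ) := Set.Ioo 0 L₁ ×ˢ Set.Ioo 0 L₂

/-- Periodic convolution `(J∗φ)(x) = ∫_Ω J(x−y) φ(y) dy`. -/
noncomputable def cconv (L₁ L₂ : ℝ) (J φ : ℝ × ℝ → ℝ) : ℝ × ℝ → ℝ :=
  fun x => ∫ y in box L₁ L₂, J (x.1 - y.1, x.2 - y.2) * φ y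

/-- `J∗1 = ∫_Ω J(x) dx`. -/
noncomputable def cJone (L₁ L₂ : ℝ) (J : ℝ × ℝ → ℝ) : ℝ := ∫ x in box L₁ L₂, J x

/-- `Ω`-periodicity of a function on `ℝ²`. -/
def PerFun (L₁ L₂ : ℝ) (φ : ℝ × ℝ → ℝ) : Prop :=
  ∀ x : ℝ × ℝ, φ (x.1 + L₁, x.2) = φ x ∧ φ (x.1, x.2 + L₂) = φ x

/-- The nonlocal energy
`E(φ) = (1/4)‖φ‖⁴_{L⁴} + ((γ_c − γ_e + J∗1)/2)‖φ‖²_{L²} − (1/2)⟨φ, J∗φ⟩_{L²}`. -/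
noncomputable def cE (L₁ L₂ γc γe : ℝ) (J φ : ℝ × ℝ → ℝ) : ℝ :=
  (1 / 4) * (∫ x in box L₁ L₂, (φ x) ^ 4)
  + ((γc - γe + cJone L₁ L₂ J) / 2) * (∫ x in box L₁ L₂, (φ x) ^ 2)
  - (1 / 2) * (∫ x in box L₁ L₂, φ x * cconv L₁ L₂ J φ x)

/-- The grid point `p_{i,j} = ((i−1/2)h, (j−1/2)h)`. -/
noncomputable def gridPt {m n : ℕ} (h : ℝ) (p : ZMod m × ZMod n) : ℝ × ℝ :=
  (((p.1.val : ℝ) - 1 / 2) * h, ((p.2.val : ℝ) - 1 / 2) * h)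

/-- Grid restriction of a continuous function. -/
noncomputable def gridRestrict (m n : ℕ) (h : ℝ) (F : ℝ × ℝ → ℝ) : ZMod m × ZMod n → ℝ :=
  fun p => F (gridPt h p)

/-- The continuous Laplacian on `ℝ²` (as iterated partial derivatives). -/
noncomputable def clap (g : ℝ × ℝ → ℝ) (x : ℝ × ℝ) : ℝ :=
  deriv (fun a => deriv (fun b => g (b, x.2)) a) x.1
    + deriv (fun a => deriv (fun b => g (x.1, b)) a) x.2


section Aux

variable {m n : ℕ} [NeZero m] [NeZero n]

lemma myshift1 (f : ZMod m × ZMod n → ℝ) :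
    ∑ p : ZMod m × ZMod n, f (p.1 + 1, p.2) = ∑ p : ZMod m × ZMod n, f p :=
  Fintype.sum_equiv ((Equiv.addRight (1 : ZMod m)).prodCongr (Equiv.refl (ZMod n)))
    (fun p => f (p.1 + 1, p.2)) f (fun _ => rfl)

lemma myshift2 (f : ZMod m × ZMod n → ℝ) :
    ∑ p : ZMod m × ZMod n, f (p.1, p.2 + 1) = ∑ p : ZMod m × ZMod n, f p :=
  Fintype.sum_equiv ((Equiv.refl (ZMod m)).prodCongr (Equiv.addRight (1 : ZMod n)))
    (fun p => f (p.1, p.2 + 1)) f (fun _ => rfl)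

lemma my_sbp (h : ℝ) (hh : h ≠ 0) (φ ψ : ZMod m × ZMod n → ℝ) :
    h ^ 2 * gip φ (glap h ψ) =
      -∑ p : ZMod m × ZMod n,
        ((φ (p.1 + 1, p.2) - φ p) * (ψ (p.1 + 1, p.2) - ψ p)
          + (φ (p.1, p.2 + 1) - φ p) * (ψ (p.1, p.2 + 1) - ψ p)) := by
  have h1 : ∑ p : ZMod m × ZMod n,
      (φ (p.1 + 1, p.2) * ψ (p.1 + 1, p.2) - φ (p.1 + 1, p.2) * ψ p
        - (φ p * ψ p - φ p * ψ (p.1 - 1, p.2))) = 0 := by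
    rw [Finset.sum_sub_distrib, sub_eq_zero]
    have := myshift1 (fun p => φ p * ψ p - φ p * ψ (p.1 - 1, p.2))
    simpa [add_sub_cancel_right] using this
  have h2 : ∑ p : ZMod m × ZMod n,
      (φ (p.1, p.2 + 1) * ψ (p.1, p.2 + 1) - φ (p.1, p.2 + 1) * ψ p
        - (φ p * ψ p - φ p * ψ (p.1, p.2 - 1))) = 0 := by
    rw [Finset.sum_sub_distrib, sub_eq_zero]
    have := myshift2 (fun p => φ p * ψ p - φ p * ψ (p.1, p.2 - 1))
    simpa [add_sub_cancel_right] using this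
  have hgip : h ^ 2 * gip φ (glap h ψ)
      = ∑ p : ZMod m × ZMod n, φ p * (ψ (p.1 + 1, p.2) + ψ (p.1 - 1, p.2)
          + ψ (p.1, p.2 + 1) + ψ (p.1, p.2 - 1) - 4 * ψ p) := by
    unfold gip glap
    rw [Finset.mul_sum]
    refine Finset.sum_congr rfl fun p _ => ?_
    field_simp
  rw [hgip]
  refine eq_neg_of_add_eq_zero_left ?_
  rw [← Finset.sum_add_distrib]
  calc ∑ p : ZMod m × ZMod n,
        (φ p * (ψ (p.1 + 1, p.2) + ψ (p.1 - 1, p.2) + ψ (p.1, p.2 + 1) + ψ (p.1, p.2 - 1)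
            - 4 * ψ p)
          + ((φ (p.1 + 1, p.2) - φ p) * (ψ (p.1 + 1, p.2) - ψ p)
            + (φ (p.1, p.2 + 1) - φ p) * (ψ (p.1, p.2 + 1) - ψ p)))
      = ∑ p : ZMod m × ZMod n,
        ((φ (p.1 + 1, p.2) * ψ (p.1 + 1, p.2) - φ (p.1 + 1, p.2) * ψ p
          - (φ p * ψ p - φ p * ψ (p.1 - 1, p.2)))
        + (φ (p.1, p.2 + 1) * ψ (p.1, p.2 + 1) - φ (p.1, p.2 + 1) * ψ p
          - (φ p * ψ p - φ p * ψ (p.1, p.2 - 1)))) :=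
        Finset.sum_congr rfl fun p _ => by ring
    _ = 0 := by rw [Finset.sum_add_distrib, h1, h2, add_zero]

end Aux

/-- estimate for the explicit concave term, Proposition
`estimate-linear`, inequality (est-linear-2). -/
theorem stmt16 (m n : ℕ) [NeZero m] [NeZero n] (h : ℝ) (hh : 0 < h)
    (ekm ek ekp : ZMod m × ZMod n → ℝ) :
    -2 * h ^ 2 * gip (fun p => (3 / 2) * ek p - (1 / 2) * ekm p)
        (glap h (fun p => (1 / 2) * (ek p + ekp p)))
      ≤ -(gradNormSq ekp - gradNormSq ek)
        + 5 * gradNormSq (fun p => (1 / 2) * (ek p + ekp p))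
        + gradNormSq (fun p => (1 / 2) * (ekm p + ek p)) := by
  have sb := my_sbp (m := m) (n := n) h (ne_of_gt hh)
    (fun p => (3 / 2) * ek p - (1 / 2) * ekm p) (fun p => (1 / 2) * (ek p + ekp p))
  have hL : -2 * h ^ 2 * gip (fun p => (3 / 2) * ek p - (1 / 2) * ekm p)
      (glap h (fun p => (1 / 2) * (ek p + ekp p)))
      = 2 * ∑ p : ZMod m × ZMod n,
        (((3 / 2) * ek (p.1 + 1, p.2) - (1 / 2) * ekm (p.1 + 1, p.2)
            - ((3 / 2) * ek p - (1 / 2) * ekm p))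
          * ((1 / 2) * (ek (p.1 + 1, p.2) + ekp (p.1 + 1, p.2)) - (1 / 2) * (ek p + ekp p))
        + ((3 / 2) * ek (p.1, p.2 + 1) - (1 / 2) * ekm (p.1, p.2 + 1)
            - ((3 / 2) * ek p - (1 / 2) * ekm p))
          * ((1 / 2) * (ek (p.1, p.2 + 1) + ekp (p.1, p.2 + 1)) - (1 / 2) * (ek p + ekp p))) := by
    linear_combination (-2 : ℝ) * sb
  rw [hL, Finset.mul_sum]
  have step : ∀ p : ZMod m × ZMod n,
      2 * (((3 / 2) * ek (p.1 + 1, p.2) - (1 / 2) * ekm (p.1 + 1, p.2)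
            - ((3 / 2) * ek p - (1 / 2) * ekm p))
          * ((1 / 2) * (ek (p.1 + 1, p.2) + ekp (p.1 + 1, p.2)) - (1 / 2) * (ek p + ekp p))
        + ((3 / 2) * ek (p.1, p.2 + 1) - (1 / 2) * ekm (p.1, p.2 + 1)
            - ((3 / 2) * ek p - (1 / 2) * ekm p))
          * ((1 / 2) * (ek (p.1, p.2 + 1) + ekp (p.1, p.2 + 1)) - (1 / 2) * (ek p + ekp p)))
      ≤ -(((ekp (p.1 + 1, p.2) - ekp p) ^ 2 + (ekp (p.1, p.2 + 1) - ekp p) ^ 2)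
          - ((ek (p.1 + 1, p.2) - ek p) ^ 2 + (ek (p.1, p.2 + 1) - ek p) ^ 2))
        + 5 * (((1 / 2) * (ek (p.1 + 1, p.2) + ekp (p.1 + 1, p.2)) - (1 / 2) * (ek p + ekp p)) ^ 2
            + ((1 / 2) * (ek (p.1, p.2 + 1) + ekp (p.1, p.2 + 1)) - (1 / 2) * (ek p + ekp p)) ^ 2)
        + (((1 / 2) * (ekm (p.1 + 1, p.2) + ek (p.1 + 1, p.2)) - (1 / 2) * (ekm p + ek p)) ^ 2
            + ((1 / 2) * (ekm (p.1, p.2 + 1) + ek (p.1, p.2 + 1)) - (1 / 2) * (ekm p + ek p)) ^ 2) := by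
    intro p
    nlinarith [sq_nonneg ((1 / 2) * (ek (p.1 + 1, p.2) + ekp (p.1 + 1, p.2)) - (1 / 2) * (ek p + ekp p)
        + ((1 / 2) * (ekm (p.1 + 1, p.2) + ek (p.1 + 1, p.2)) - (1 / 2) * (ekm p + ek p))),
      sq_nonneg ((1 / 2) * (ek (p.1, p.2 + 1) + ekp (p.1, p.2 + 1)) - (1 / 2) * (ek p + ekp p)
        + ((1 / 2) * (ekm (p.1, p.2 + 1) + ek (p.1, p.2 + 1)) - (1 / 2) * (ekm p + ek p)))]
  calc (∑ p : ZMod m × ZMod n, _) ≤ _ := Finset.sum_le_sum fun p _ => step p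
    _ = -(gradNormSq ekp - gradNormSq ek)
        + 5 * gradNormSq (fun p => (1 / 2) * (ek p + ekp p))
        + gradNormSq (fun p => (1 / 2) * (ekm p + ek p)) := by
      simp only [gradNormSq, Finset.sum_add_distrib, Finset.sum_sub_distrib,
        Finset.sum_neg_distrib, ← Finset.mul_sum]
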